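/- Let U ⊆ ℂ be open and F = (a, b; c, d) : U → SL(2,ℂ) holomorphic with det F'(z) = 0 and F'(z) ≠ 0 for all z ∈ U (a holomorphic null immersion). Define f : U → ℝ³ by f = (Re w, Im w, x₃), where w = (a·conj(c) + b·conj(d))/(|c|² + |d|²) and x₃ = 1/(|c|² + |d|²). Then f is a conformal immersion: writing z = x + iy, at every point of U one has ‖∂f/∂x‖ = ‖∂f/∂y‖ > 0 and ⟨∂f/∂x, ∂f/∂y⟩ = 0. -/

import Mathlib

/-!
Write the real derivative of a map `g : ℂ → ℂ` as `v ↦ α v + β v̄`, with Wirtinger derivatives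
`α = ∂g`, `β = ∂̄g`. For `f = (w, x₃)` one has
`‖f_x‖² - ‖f_y‖² - 2i ⟪f_x, f_y⟫ = 4 (∂w · conj (∂̄w) + (∂x₃)²)`, so `f` is conformal as soon as
this Hopf-type quantity vanishes. With `q = c c̄ + d d̄` and `n = a c̄ + b d̄` we have `w = n / q`
and `x₃ = 1 / q`; the relation `det F = 1` gives `conj (∂̄w) = (d c' - c d') / q²`, and the vanishing
becomes a polynomial identity in the entries of `F`, `F'` and in `c̄, d̄`, which follows from
`det F = 1`, `(det F)' = 0` and `det F' = 0`. Finally, if `∂w`, `∂̄w` and `∂x₃` all vanish, two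
linear systems with determinant `q ≠ 0` force `F' = 0`, so `f` is an immersion.
-/

attribute [local instance] Matrix.normedAddCommGroup Matrix.normedSpace

open Matrix Complex RealInnerProductSpace
open ComplexConjugate

namespace Complex

/-- The `ℝ`-linear map `v ↦ α v + β v̄`: a function with this derivative at a point has Wirtinger
derivatives `∂g = α` and `∂̄g = β` there. -/
noncomputable def wirtingerCLM (α β : ℂ) : ℂ →L[ℝ] ℂ :=
  α • ContinuousLinearMap.id ℝ ℂ + β • conjCLE.toContinuousLinearMap

@[simp]
lemma wirtingerCLM_apply (α β v : ℂ) : wirtingerCLM α β v = α * v + β * conj v := by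
  simp [wirtingerCLM]

/-- The differential `v ↦ (α v + β v̄, 2 Re (r v)) ∈ ℂ × ℝ = ℝ³` of a map `(w, x₃) : ℂ → ℂ × ℝ`
with `∂w = α`, `∂̄w = β` and `∂x₃ = r`. -/
noncomputable def wirtingerDifferential (α β r : ℂ) (v : ℂ) : EuclideanSpace ℝ (Fin 3) :=
  WithLp.toLp 2 ![(wirtingerCLM α β v).re, (wirtingerCLM α β v).im, 2 * (r * v).re]

end Complex

section WirtingerCalculus

variable {g h : ℂ → ℂ} {p α β γ δ : ℂ}

lemma HasDerivAt.hasFDerivAt_wirtingerCLM (hg : HasDerivAt g α p) :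
    HasFDerivAt g (wirtingerCLM α 0) p :=
  (hg.hasFDerivAt.restrictScalars ℝ).congr_fderiv <| by ext v; simp [mul_comm]

lemma HasFDerivAt.conj_wirtingerCLM (hg : HasFDerivAt g (wirtingerCLM α β) p) :
    HasFDerivAt (fun z => conj (g z)) (wirtingerCLM (conj β) (conj α)) p :=
  (conjCLE.toContinuousLinearMap.hasFDerivAt.comp p hg).congr_fderiv <| by
    ext v; simp [_root_.map_mul]; ring

lemma HasFDerivAt.add_wirtingerCLM (hg : HasFDerivAt g (wirtingerCLM α β) p)
    (hh : HasFDerivAt h (wirtingerCLM γ δ) p) :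
    HasFDerivAt (fun z => g z + h z) (wirtingerCLM (α + γ) (β + δ)) p :=
  (hg.add hh).congr_fderiv <| by ext v; simp; ring

lemma HasFDerivAt.mul_wirtingerCLM (hg : HasFDerivAt g (wirtingerCLM α β) p)
    (hh : HasFDerivAt h (wirtingerCLM γ δ) p) :
    HasFDerivAt (fun z => g z * h z) (wirtingerCLM (g p * γ + h p * α) (g p * δ + h p * β)) p :=
  (hg.mul hh).congr_fderiv <| by ext v; simp; ring

lemma HasFDerivAt.inv_wirtingerCLM (hg : HasFDerivAt g (wirtingerCLM α β) p) (hp : g p ≠ 0) :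
    HasFDerivAt (fun z => (g z)⁻¹) (wirtingerCLM (-α / g p ^ 2) (-β / g p ^ 2)) p :=
  ((hasFDerivAt_inv' hp).comp p hg).congr_fderiv <| by
    ext v; simp [ContinuousLinearMap.mulLeftRight_apply]; field_simp; ring

lemma HasFDerivAt.div_wirtingerCLM (hg : HasFDerivAt g (wirtingerCLM α β) p)
    (hh : HasFDerivAt h (wirtingerCLM γ δ) p) (hp : h p ≠ 0) :
    HasFDerivAt (fun z => g z / h z)
      (wirtingerCLM ((h p * α - g p * γ) / h p ^ 2) ((h p * β - g p * δ) / h p ^ 2)) p := by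
  simp only [div_eq_mul_inv]
  refine (hg.mul_wirtingerCLM (hh.inv_wirtingerCLM hp)).congr_fderiv ?_
  ext v; simp; field_simp; ring

lemma HasDerivAt.hasFDerivAt_mul_conj_add_mul_conj {a b c d : ℂ → ℂ} {A' B' C' D' : ℂ}
    (ha : HasDerivAt a A' p) (hb : HasDerivAt b B' p) (hc : HasDerivAt c C' p)
    (hd : HasDerivAt d D' p) :
    HasFDerivAt (fun z => a z * conj (c z) + b z * conj (d z))
      (wirtingerCLM (A' * conj (c p) + B' * conj (d p)) (a p * conj C' + b p * conj D')) p := by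
  have hc' := hc.hasFDerivAt_wirtingerCLM.conj_wirtingerCLM
  have hd' := hd.hasFDerivAt_wirtingerCLM.conj_wirtingerCLM
  refine ((ha.hasFDerivAt_wirtingerCLM.mul_wirtingerCLM hc').add_wirtingerCLM
    (hb.hasFDerivAt_wirtingerCLM.mul_wirtingerCLM hd')).congr_fderiv ?_
  simp only [map_zero]
  congr 1 <;> ring

end WirtingerCalculus

lemma fderiv_piLp_apply {𝕜 ι E : Type*} [NontriviallyNormedField 𝕜] [Fintype ι]
    [NormedAddCommGroup E] [NormedSpace 𝕜 E] {F : ι → Type*} [∀ i, NormedAddCommGroup (F i)]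
    [∀ i, NormedSpace 𝕜 (F i)] (q : ENNReal) [Fact (1 ≤ q)] {f : E → PiLp q F} {x : E}
    (hf : DifferentiableAt 𝕜 f x) (v : E) (i : ι) :
    fderiv 𝕜 f x v i = fderiv 𝕜 (fun y => f y i) x v := by
  rw [show (fun y => f y i) = (fun g : PiLp q F => g i) ∘ f from rfl,
    ((PiLp.hasFDerivAt_apply q (f x) i).comp x hf.hasFDerivAt).fderiv]
  rfl

lemma fderiv_eq_wirtingerDifferential {w x : ℂ → ℂ} {p α β r s : ℂ}
    {f : ℂ → EuclideanSpace ℝ (Fin 3)} (hw : HasFDerivAt w (wirtingerCLM α β) p)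
    (hx : HasFDerivAt x (wirtingerCLM r s) p) (hs : s = conj r)
    (hf : ∀ z, f z = ![(w z).re, (w z).im, (x z).re]) :
    DifferentiableAt ℝ f p ∧ ⇑(fderiv ℝ f p) = wirtingerDifferential α β r := by
  subst hs
  have hcomp : ∀ i, HasFDerivAt (fun z => f z i) (![reCLM ∘L wirtingerCLM α β,
      imCLM ∘L wirtingerCLM α β, reCLM ∘L wirtingerCLM r (conj r)] i) p := by
    intro i
    fin_cases i
    · simp only [hf]; exact reCLM.hasFDerivAt.comp p hw
    · simp only [hf]; exact imCLM.hasFDerivAt.comp p hw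
    · simp only [hf]; exact reCLM.hasFDerivAt.comp p hx
  have hfd : DifferentiableAt ℝ f p :=
    (differentiableAt_piLp 2).2 fun i => (hcomp i).differentiableAt
  refine ⟨hfd, funext fun v => PiLp.ext fun i => ?_⟩
  rw [fderiv_piLp_apply 2 hfd, (hcomp i).fderiv]
  fin_cases i <;> simp [wirtingerDifferential]
  ring

section Conformality

variable {α β r : ℂ}

lemma norm_sq_sub_norm_sq_wirtingerDifferential :
    ‖wirtingerDifferential α β r 1‖ ^ 2 - ‖wirtingerDifferential α β r I‖ ^ 2
      = 4 * (α * conj β + r ^ 2).re := by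
  simp only [EuclideanSpace.real_norm_sq_eq, Fin.sum_univ_three]
  simp [wirtingerDifferential, sq]
  ring

lemma norm_sq_add_norm_sq_wirtingerDifferential :
    ‖wirtingerDifferential α β r 1‖ ^ 2 + ‖wirtingerDifferential α β r I‖ ^ 2
      = 2 * (normSq α + normSq β) + 4 * normSq r := by
  simp only [EuclideanSpace.real_norm_sq_eq, Fin.sum_univ_three]
  simp [wirtingerDifferential, normSq_apply]
  ring

lemma inner_wirtingerDifferential :
    ⟪wirtingerDifferential α β r 1, wirtingerDifferential α β r I⟫
      = -2 * (α * conj β + r ^ 2).im := by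
  simp [PiLp.inner_apply, Fin.sum_univ_three, wirtingerDifferential, sq]
  ring

lemma conformal_wirtingerDifferential (hQ : α * conj β + r ^ 2 = 0)
    (hne : ¬(α = 0 ∧ β = 0 ∧ r = 0)) :
    ‖wirtingerDifferential α β r 1‖ = ‖wirtingerDifferential α β r I‖ ∧
      0 < ‖wirtingerDifferential α β r 1‖ ∧
      ⟪wirtingerDifferential α β r 1, wirtingerDifferential α β r I⟫ = 0 := by
  have hnorm : ‖wirtingerDifferential α β r 1‖ ^ 2 = ‖wirtingerDifferential α β r I‖ ^ 2 := by
    linarith [norm_sq_sub_norm_sq_wirtingerDifferential (α := α) (β := β) (r := r),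
      show (α * conj β + r ^ 2).re = 0 by simp [hQ]]
  refine ⟨(sq_eq_sq₀ (norm_nonneg _) (norm_nonneg _)).1 hnorm, ?_,
    by simp [inner_wirtingerDifferential, hQ]⟩
  have hpos : 0 < ‖wirtingerDifferential α β r 1‖ ^ 2 := by
    have := norm_sq_add_norm_sq_wirtingerDifferential (α := α) (β := β) (r := r)
    rw [not_and_or, not_and_or] at hne
    rcases hne with h | h | h <;> have := normSq_pos.2 h <;>
      nlinarith [normSq_nonneg α, normSq_nonneg β, normSq_nonneg r]
  exact (norm_nonneg _).lt_of_ne' (sq_pos_iff.1 hpos)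

end Conformality

/-- `X` and `Y` stand for `c̄` and `d̄`, which enter only as free variables. -/
lemma null_hopf_identity {R : Type*} [CommRing R] {A B C D A' B' C' D' : R} (X Y : R)
    (hdet : A * D - B * C = 1) (hdet' : A' * D + A * D' - (B' * C + B * C') = 0)
    (hnull : A' * D' - B' * C' = 0) :
    ((C * X + D * Y) * (A' * X + B' * Y) - (A * X + B * Y) * (C' * X + D' * Y)) * (D * C' - C * D')
      + (C' * X + D' * Y) ^ 2 = 0 := by
  linear_combination -(C' * X + D' * Y) ^ 2 * hdet + (C * X + D * Y) * (C' * X + D' * Y) * hdet'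
    - (C * X + D * Y) ^ 2 * hnull

lemma eq_zero_of_mul_add_mul_eq_zero {K : Type*} [Field K] {C D P Q X Y : K}
    (hCD : C * P + D * Q ≠ 0) (h₁ : X * P + Y * Q = 0) (h₂ : X * D - Y * C = 0) :
    X = 0 ∧ Y = 0 := by
  constructor
  · refine (mul_eq_zero.1 ?_).resolve_right hCD
    linear_combination C * h₁ + Q * h₂
  · refine (mul_eq_zero.1 ?_).resolve_right hCD
    linear_combination D * h₁ - P * h₂

section Bryant

variable {A B C D A' B' C' D' q n : ℂ}

lemma ofReal_norm_sq_add_norm_sq (u v : ℂ) :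
    ((‖u‖ ^ 2 + ‖v‖ ^ 2 : ℝ) : ℂ) = u * conj u + v * conj v := by
  simp [mul_conj, normSq_eq_norm_sq]

lemma mul_conj_add_mul_conj_ne_zero (hdet : A * D - B * C = 1) :
    C * conj C + D * conj D ≠ 0 := by
  rw [← ofReal_norm_sq_add_norm_sq, ofReal_ne_zero]
  have : C ≠ 0 ∨ D ≠ 0 := by
    by_contra! h
    simp [h.1, h.2] at hdet
  rcases this with h | h <;> have := norm_pos_iff.2 h <;> positivity

lemma bryant_dbar_conj_eq (hdet : A * D - B * C = 1) (hq : q = C * conj C + D * conj D)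
    (hn : n = A * conj C + B * conj D) :
    conj ((q * (A * conj C' + B * conj D') - n * (C * conj C' + D * conj D')) / q ^ 2)
      = (D * C' - C * D') / q ^ 2 := by
  have hq_conj : conj q = q := by rw [hq]; simp; ring
  have hnum : q * (A * conj C' + B * conj D') - n * (C * conj C' + D * conj D')
      = conj D * conj C' - conj C * conj D' := by
    rw [hq, hn]
    linear_combination (conj D * conj C' - conj C * conj D') * hdet
  rw [map_div₀, hnum, map_pow, hq_conj]
  simp

lemma bryant_hopf_eq_zero (hdet : A * D - B * C = 1)
    (hdet' : A' * D + A * D' - (B' * C + B * C') = 0) (hnull : A' * D' - B' * C' = 0)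
    (hq : q = C * conj C + D * conj D) (hn : n = A * conj C + B * conj D) :
    (q * (A' * conj C + B' * conj D) - n * (C' * conj C + D' * conj D)) / q ^ 2
        * conj ((q * (A * conj C' + B * conj D') - n * (C * conj C' + D * conj D')) / q ^ 2)
      + (-(C' * conj C + D' * conj D) / q ^ 2) ^ 2 = 0 := by
  have hq0 : q ≠ 0 := hq ▸ mul_conj_add_mul_conj_ne_zero hdet
  rw [bryant_dbar_conj_eq hdet hq hn]
  field_simp
  rw [hq, hn]
  linear_combination null_hopf_identity (conj C) (conj D) hdet hdet' hnull

lemma bryant_wirtinger_ne_zero (hdet : A * D - B * C = 1)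
    (hdet' : A' * D + A * D' - (B' * C + B * C') = 0)
    (himm : ¬(A' = 0 ∧ B' = 0 ∧ C' = 0 ∧ D' = 0))
    (hq : q = C * conj C + D * conj D) (hn : n = A * conj C + B * conj D) :
    ¬((q * (A' * conj C + B' * conj D) - n * (C' * conj C + D' * conj D)) / q ^ 2 = 0 ∧
      (q * (A * conj C' + B * conj D') - n * (C * conj C' + D * conj D')) / q ^ 2 = 0 ∧
      -(C' * conj C + D' * conj D) / q ^ 2 = 0) := by
  have hq0 := mul_conj_add_mul_conj_ne_zero hdet
  rintro ⟨hα, hβ, hr⟩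
  have hβ' := bryant_dbar_conj_eq (C' := C') (D' := D') hdet hq hn
  subst hq hn
  rw [hβ, map_zero, eq_comm, div_eq_zero_iff, or_iff_left (pow_ne_zero 2 hq0)] at hβ'
  simp only [div_eq_zero_iff, neg_eq_zero, pow_eq_zero_iff two_ne_zero, hq0, or_false] at hα hr
  obtain ⟨rfl, rfl⟩ := eq_zero_of_mul_add_mul_eq_zero hq0 hr (by linear_combination hβ')
  obtain ⟨hA', hB'⟩ := eq_zero_of_mul_add_mul_eq_zero hq0
    ((mul_eq_zero.1 (by simpa using hα)).resolve_left hq0) (by linear_combination hdet')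
  exact himm ⟨hA', hB', rfl, rfl⟩

theorem bryant_conformal_at {a b c d w : ℂ → ℂ} {f : ℂ → EuclideanSpace ℝ (Fin 3)} {p : ℂ}
    (ha : HasDerivAt a A' p) (hb : HasDerivAt b B' p) (hc : HasDerivAt c C' p)
    (hd : HasDerivAt d D' p) (hdet : a p * d p - b p * c p = 1)
    (hdet' : A' * d p + a p * D' - (B' * c p + b p * C') = 0) (hnull : A' * D' - B' * C' = 0)
    (himm : ¬(A' = 0 ∧ B' = 0 ∧ C' = 0 ∧ D' = 0))
    (hw : w = fun z =>
      (a z * conj (c z) + b z * conj (d z)) / (c z * conj (c z) + d z * conj (d z)))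
    (hf : ∀ z, f z = ![(w z).re, (w z).im, ((c z * conj (c z) + d z * conj (d z))⁻¹).re]) :
    DifferentiableAt ℝ f p ∧ ‖fderiv ℝ f p 1‖ = ‖fderiv ℝ f p I‖ ∧
      0 < ‖fderiv ℝ f p 1‖ ∧ ⟪fderiv ℝ f p 1, fderiv ℝ f p I⟫ = 0 := by
  have hq := mul_conj_add_mul_conj_ne_zero hdet
  have hn' := ha.hasFDerivAt_mul_conj_add_mul_conj hb hc hd
  have hq' := hc.hasFDerivAt_mul_conj_add_mul_conj hd hc hd
  subst hw
  obtain ⟨hfd, hL⟩ := fderiv_eq_wirtingerDifferential (hn'.div_wirtingerCLM hq' hq)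
    (hq'.inv_wirtingerCLM hq) (by simp; ring) hf
  rw [hL]
  exact ⟨hfd, conformal_wirtingerDifferential (bryant_hopf_eq_zero hdet hdet' hnull rfl rfl)
    (bryant_wirtinger_ne_zero hdet hdet' himm rfl rfl)⟩

end Bryant

lemma hasDerivAt_matrix_fin_two {𝕜 : Type*} [NontriviallyNormedField 𝕜] {a b c d : 𝕜 → 𝕜}
    {p A' B' C' D' : 𝕜} (ha : HasDerivAt a A' p) (hb : HasDerivAt b B' p)
    (hc : HasDerivAt c C' p) (hd : HasDerivAt d D' p) :
    HasDerivAt (fun z => !![a z, b z; c z, d z]) !![A', B'; C', D'] p := by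
  refine hasDerivAt_pi.2 fun i => hasDerivAt_pi.2 fun j => ?_
  fin_cases i <;> fin_cases j <;> assumption

theorem bryant_representation_conformal_immersion
    (U : Set ℂ) (hU : IsOpen U)
    (a b c d : ℂ → ℂ)
    (ha : DifferentiableOn ℂ a U) (hb : DifferentiableOn ℂ b U)
    (hc : DifferentiableOn ℂ c U) (hd : DifferentiableOn ℂ d U)
    (F : ℂ → Matrix (Fin 2) (Fin 2) ℂ)
    (hF : ∀ z, F z = !![a z, b z; c z, d z])
    (hSL : ∀ z ∈ U, (F z).det = 1)
    (hnull : ∀ z ∈ U, (deriv F z).det = 0)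
    (himm : ∀ z ∈ U, deriv F z ≠ 0)
    (w : ℂ → ℂ)
    (hw : ∀ z, w z = (a z * (starRingEnd ℂ) (c z) + b z * (starRingEnd ℂ) (d z)) /
      ((‖c z‖ ^ 2 + ‖d z‖ ^ 2 : ℝ) : ℂ))
    (x₃ : ℂ → ℝ)
    (hx₃ : ∀ z, x₃ z = 1 / (‖c z‖ ^ 2 + ‖d z‖ ^ 2))
    (f : ℂ → EuclideanSpace ℝ (Fin 3))
    (hf : ∀ z, f z = ![(w z).re, (w z).im, x₃ z]) :
    ∀ p ∈ U,
      DifferentiableAt ℝ f p ∧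
      ‖fderiv ℝ f p 1‖ = ‖fderiv ℝ f p Complex.I‖ ∧
      0 < ‖fderiv ℝ f p 1‖ ∧
      ⟪fderiv ℝ f p 1, fderiv ℝ f p Complex.I⟫ = 0 := by
  intro p hp
  have hpU := hU.mem_nhds hp
  have ha' := (ha.differentiableAt hpU).hasDerivAt
  have hb' := (hb.differentiableAt hpU).hasDerivAt
  have hc' := (hc.differentiableAt hpU).hasDerivAt
  have hd' := (hd.differentiableAt hpU).hasDerivAt
  have hF' : deriv F p = !![deriv a p, deriv b p; deriv c p, deriv d p] := by
    rw [funext hF]; exact (hasDerivAt_matrix_fin_two ha' hb' hc' hd').deriv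
  have hdet : ∀ z ∈ U, a z * d z - b z * c z = 1 := fun z hz => by
    simpa [hF, det_fin_two_of] using hSL z hz
  refine bryant_conformal_at (w := w) ha' hb' hc' hd' (hdet p hp) ?_ ?_ ?_
    (funext fun z => ?_) fun z => ?_
  · exact ((ha'.mul hd').sub (hb'.mul hc')).unique
      ((hasDerivAt_const p 1).congr_of_eventuallyEq (Filter.eventually_of_mem hpU hdet))
  · simpa [hF', det_fin_two_of] using hnull p hp
  · rintro ⟨h₁, h₂, h₃, h₄⟩
    exact himm p hp (by rw [hF', h₁, h₂, h₃, h₄]; exact (Matrix.eta_fin_two 0).symm)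
  · rw [hw, ofReal_norm_sq_add_norm_sq]
  · rw [hf, hx₃, ← ofReal_norm_sq_add_norm_sq, ← ofReal_inv, ofReal_re, one_div]
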